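/- arXiv:1503.04512 — 2 statements merged into one kernel-verified Lean document; each statement's English description precedes it below -/
import Mathlib

section
/- Let p: ℝⁿ → (0,∞] be a measurable variable exponent with p₊ := ess sup p ≤ 1. Then for all nonnegative measurable functions f, g on ℝⁿ, the reverse Minkowski inequality holds: ‖f‖_{L^{p(·)}} + ‖g‖_{L^{p(·)}} ≤ ‖f+g‖_{L^{p(·)}}. -/
open MeasureTheory
open scoped ENNReal

noncomputable section

/-- The building block `ρ_{p(x)}(t)` of the variable-exponent modular:
`t^p` when `p < ∞`, and `0` for `t ≤ 1`, `∞` for `t > 1`, when `p = ∞`. -/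
def rhoVar (p : ℝ≥0∞) (t : ℝ≥0∞) : ℝ≥0∞ :=
  if p = ∞ then (if t ≤ 1 then 0 else ∞) else t ^ p.toReal

/-- The variable-exponent modular `ϱ_{p(·)}(f) = ∫ ρ_{p(x)}(f(x)) dx` for a
nonnegative (`ℝ≥0∞`-valued) function `f` on `ℝⁿ` (as `EuclideanSpace ℝ (Fin n)`). -/
def varModular {n : ℕ} (p : EuclideanSpace ℝ (Fin n) → ℝ≥0∞)
    (f : EuclideanSpace ℝ (Fin n) → ℝ≥0∞) : ℝ≥0∞ :=
  ∫⁻ x, rhoVar (p x) (f x)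

/-- The variable-exponent Lebesgue (Luxemburg) quasi-norm
`‖f‖_{L^{p(·)}} = inf {λ > 0 : ϱ_{p(·)}(f/λ) ≤ 1}`. -/
def varNorm {n : ℕ} (p : EuclideanSpace ℝ (Fin n) → ℝ≥0∞)
    (f : EuclideanSpace ℝ (Fin n) → ℝ≥0∞) : ℝ≥0∞ :=
  sInf {lam : ℝ≥0∞ | 0 < lam ∧ varModular p (fun x => f x / lam) ≤ 1}

/-!
Reverse Minkowski. For `p ≤ 1` the map `t ↦ ρ_p(t) = t ^ p` is concave, so for any splitting
`μ = a + b` into positive parts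

  `(a/μ) ϱ(f/a) + (b/μ) ϱ(g/b) ≤ ϱ((f+g)/μ)`.

If `ϱ((f+g)/μ) ≤ 1`, the smaller of `ϱ(f/a)`, `ϱ(g/b)` is at most `1`, so `‖f‖ ≤ a` or `‖g‖ ≤ b`.
If `μ < ‖f‖ + ‖g‖`, the proportional splitting `a = μ‖f‖/(‖f‖+‖g‖)`, `b = μ‖g‖/(‖f‖+‖g‖)`
violates both alternatives; hence `‖f‖ + ‖g‖ ≤ μ` for every admissible `μ`.
-/

namespace ENNReal

lemma arith_mean2_rpow_le_rpow_arith_mean {w₁ w₂ u v : ℝ≥0∞} (hw : w₁ + w₂ = 1) {q : ℝ}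
    (hq₀ : 0 ≤ q) (hq₁ : q ≤ 1) :
    w₁ * u ^ q + w₂ * v ^ q ≤ (w₁ * u + w₂ * v) ^ q := by
  rcases hq₀.eq_or_lt with rfl | hq₀
  · simp [hw]
  -- convexity of `t ↦ t ^ (1/q)` applied to `u ^ q`, `v ^ q`
  have h := rpow_arith_mean_le_arith_mean2_rpow w₁ w₂ (u ^ q) (v ^ q) hw (p := 1 / q)
    (by rwa [le_div_iff₀ hq₀, one_mul])
  simp only [one_div, rpow_rpow_inv hq₀.ne'] at h
  calc w₁ * u ^ q + w₂ * v ^ q = ((w₁ * u ^ q + w₂ * v ^ q) ^ q⁻¹) ^ q :=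
        (rpow_inv_rpow hq₀.ne' _).symm
    _ ≤ (w₁ * u + w₂ * v) ^ q := rpow_le_rpow h hq₀.le

lemma min_le_mul_add_mul {w₁ w₂ : ℝ≥0∞} (hw : w₁ + w₂ = 1) (x y : ℝ≥0∞) :
    min x y ≤ w₁ * x + w₂ * y :=
  calc min x y = w₁ * min x y + w₂ * min x y := by rw [← add_mul, hw, one_mul]
    _ ≤ w₁ * x + w₂ * y := by gcongr <;> simp

lemma exists_add_eq_of_lt_add {μ A B : ℝ≥0∞} (hA : A ≤ μ) (hB : B ≤ μ) (h : μ < A + B) :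
    ∃ a b, 0 < a ∧ a < A ∧ 0 < b ∧ b < B ∧ a + b = μ := by
  have hμ : μ ≠ ∞ := h.ne_top
  have hA₀ : A ≠ 0 := by rintro rfl; exact (zero_add B ▸ h).not_ge hB
  have hB₀ : B ≠ 0 := by rintro rfl; exact (add_zero A ▸ h).not_ge hA
  have hA_top : A ≠ ∞ := ne_top_of_le_ne_top hμ hA
  have hB_top : B ≠ ∞ := ne_top_of_le_ne_top hμ hB
  have hS₀ : A + B ≠ 0 := by simp [hA₀]
  have hS_top : A + B ≠ ∞ := add_ne_top.2 ⟨hA_top, hB_top⟩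
  have hμ₀ : μ ≠ 0 := (pos_iff_ne_zero.2 hA₀).trans_le hA |>.ne'
  have ht : μ / (A + B) < 1 := (ENNReal.div_lt_iff (.inl hS₀) (.inl hS_top)).2 (by rwa [one_mul])
  have ht₀ : 0 < μ / (A + B) := ENNReal.div_pos hμ₀ hS_top
  refine ⟨μ / (A + B) * A, μ / (A + B) * B, mul_pos ht₀.ne' hA₀, ?_, mul_pos ht₀.ne' hB₀, ?_, ?_⟩
  · simpa using ENNReal.mul_lt_mul_left hA₀ hA_top ht
  · simpa using ENNReal.mul_lt_mul_left hB₀ hB_top ht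
  · rw [← mul_add, ENNReal.div_mul_cancel hS₀ hS_top]

lemma div_add_add_div_add_eq_one {a b : ℝ≥0∞} (ha₀ : a ≠ 0) (ha : a ≠ ∞) (hb : b ≠ ∞) :
    a / (a + b) + b / (a + b) = 1 := by
  rw [ENNReal.div_add_div_same, ENNReal.div_self (by simp [ha₀]) (add_ne_top.2 ⟨ha, hb⟩)]

end ENNReal

lemma rhoVar_of_ne_top {p : ℝ≥0∞} (hp : p ≠ ∞) (t : ℝ≥0∞) : rhoVar p t = t ^ p.toReal :=
  if_neg hp

lemma rhoVar_mono (p : ℝ≥0∞) {s t : ℝ≥0∞} (h : s ≤ t) : rhoVar p s ≤ rhoVar p t := by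
  unfold rhoVar
  split_ifs with hp hs ht ht
  · exact le_rfl
  · exact le_top
  · exact absurd (h.trans ht) hs
  · exact le_rfl
  · exact ENNReal.rpow_le_rpow h ENNReal.toReal_nonneg

lemma mul_rhoVar_add_mul_rhoVar_le {p : ℝ≥0∞} (hp : p ≤ 1) {w₁ w₂ : ℝ≥0∞} (hw : w₁ + w₂ = 1)
    (u v : ℝ≥0∞) : w₁ * rhoVar p u + w₂ * rhoVar p v ≤ rhoVar p (w₁ * u + w₂ * v) := by
  have hp_top : p ≠ ∞ := ne_top_of_le_ne_top ENNReal.one_ne_top hp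
  simp only [rhoVar_of_ne_top hp_top]
  exact ENNReal.arith_mean2_rpow_le_rpow_arith_mean hw ENNReal.toReal_nonneg
    (ENNReal.toReal_le_of_le_ofReal zero_le_one (by simpa using hp))

section VariableExponent

variable {n : ℕ} {p f g : EuclideanSpace ℝ (Fin n) → ℝ≥0∞}

lemma varModular_mono (h : ∀ x, f x ≤ g x) :
    varModular p f ≤ varModular p g :=
  lintegral_mono fun x => rhoVar_mono _ (h x)

lemma varNorm_le_of_varModular_le_one {a : ℝ≥0∞} (ha : 0 < a)
    (h : varModular p (fun x => f x / a) ≤ 1) : varNorm p f ≤ a :=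
  sInf_le ⟨ha, h⟩

lemma weighted_varModular_add_le (hp : ∀ᵐ x, p x ≤ 1) {a b : ℝ≥0∞} (ha₀ : a ≠ 0)
    (ha : a ≠ ∞) (hb₀ : b ≠ 0) (hb : b ≠ ∞) :
    a / (a + b) * varModular p (fun x => f x / a) + b / (a + b) * varModular p (fun x => g x / b)
      ≤ varModular p (fun x => (f + g) x / (a + b)) := by
  have hw := ENNReal.div_add_add_div_add_eq_one ha₀ ha hb
  have hcancel : ∀ c u : ℝ≥0∞, c ≠ 0 → c ≠ ∞ → c / (a + b) * (u / c) = u / (a + b) := by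
    intro c u hc₀ hc
    simp only [div_eq_mul_inv]
    calc c * (a + b)⁻¹ * (u * c⁻¹) = c * c⁻¹ * (u * (a + b)⁻¹) := by ring
      _ = u * (a + b)⁻¹ := by rw [ENNReal.mul_inv_cancel hc₀ hc, one_mul]
  calc _ ≤ ∫⁻ x, a / (a + b) * rhoVar (p x) (f x / a) + b / (a + b) * rhoVar (p x) (g x / b) :=
        (add_le_add (lintegral_const_mul_le _ _) (lintegral_const_mul_le _ _)).trans
          (le_lintegral_add _ _)
    _ ≤ _ := lintegral_mono_ae <| hp.mono fun x hx => by
        simpa [hcancel a _ ha₀ ha, hcancel b _ hb₀ hb, ENNReal.div_add_div_same]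
          using mul_rhoVar_add_mul_rhoVar_le hx hw (f x / a) (g x / b)

lemma varNorm_le_or_varNorm_le (hp : ∀ᵐ x, p x ≤ 1) {a b : ℝ≥0∞} (ha₀ : a ≠ 0) (ha : a ≠ ∞)
    (hb₀ : b ≠ 0) (hb : b ≠ ∞) (h : varModular p (fun x => (f + g) x / (a + b)) ≤ 1) :
    varNorm p f ≤ a ∨ varNorm p g ≤ b := by
  have hw := ENNReal.div_add_add_div_add_eq_one ha₀ ha hb
  have hmin := (ENNReal.min_le_mul_add_mul hw _ _).trans
    ((weighted_varModular_add_le hp ha₀ ha hb₀ hb).trans h)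
  rcases min_le_iff.1 hmin with hf | hg
  · exact .inl (varNorm_le_of_varModular_le_one (pos_iff_ne_zero.2 ha₀) hf)
  · exact .inr (varNorm_le_of_varModular_le_one (pos_iff_ne_zero.2 hb₀) hg)

end VariableExponent

theorem reverse_minkowski_varNorm_general {n : ℕ}
    (p : EuclideanSpace ℝ (Fin n) → ℝ≥0∞)
    (hp_plus : essSup p (volume : Measure (EuclideanSpace ℝ (Fin n))) ≤ 1)
    (f g : EuclideanSpace ℝ (Fin n) → ℝ≥0∞) :
    varNorm p f + varNorm p g ≤ varNorm p (f + g) := by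
  have hp : ∀ᵐ x, p x ≤ 1 := (ENNReal.ae_le_essSup p).mono fun x hx => hx.trans hp_plus
  refine le_sInf fun μ ⟨hμ, hμmod⟩ => ?_
  have hf : varNorm p f ≤ μ := varNorm_le_of_varModular_le_one hμ <|
    (varModular_mono fun x => ENNReal.div_le_div_right le_self_add _).trans hμmod
  have hg : varNorm p g ≤ μ := varNorm_le_of_varModular_le_one hμ <|
    (varModular_mono fun x => ENNReal.div_le_div_right le_add_self _).trans hμmod
  by_contra! hlt
  obtain ⟨a, b, ha₀, ha, hb₀, hb, rfl⟩ := ENNReal.exists_add_eq_of_lt_add hf hg hlt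
  rcases varNorm_le_or_varNorm_le hp ha₀.ne' ha.ne_top hb₀.ne' hb.ne_top hμmod with h | h
  · exact h.not_gt ha
  · exact h.not_gt hb

/-- If `p : ℝⁿ → (0,∞]` is a measurable variable exponent with
`p₊ = ess sup p ≤ 1`, then for all nonnegative measurable `f, g`, the reverse
Minkowski inequality `‖f‖_{p(·)} + ‖g‖_{p(·)} ≤ ‖f+g‖_{p(·)}` holds. -/
theorem reverse_minkowski_varNorm {n : ℕ}
    (p : EuclideanSpace ℝ (Fin n) → ℝ≥0∞)
    (hp_meas : Measurable p)
    (hp_pos : ∀ x, 0 < p x)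
    (hp_plus : essSup p (volume : Measure (EuclideanSpace ℝ (Fin n))) ≤ 1)
    (f g : EuclideanSpace ℝ (Fin n) → ℝ≥0∞)
    (hf : Measurable f) (hg : Measurable g) :
    varNorm p f + varNorm p g ≤ varNorm p (f + g) :=
  reverse_minkowski_varNorm_general p hp_plus f g
end
end

section
/- Let p, q: ℝⁿ → (0,∞] be measurable exponents with q₊ < ∞, and let f be a measurable function on ℝⁿ. (i) If ‖f‖_{L^{p(·)}} ≤ 1 then ‖ |f|^{q(·)} ‖_{L^{p(·)/q(·)}} ≤ ‖f‖_{L^{p(·)}}^{q₋}. (ii) If ‖f‖_{L^{p(·)}} > 1 then ‖ |f|^{q(·)} ‖_{L^{p(·)/q(·)}} ≤ ‖f‖_{L^{p(·)}}^{q₊}. (iii) If ‖ |f|^{q(·)} ‖_{L^{p(·)/q(·)}} ≥ 1 then ‖f‖_{L^{p(·)}} ≤ ‖ |f|^{q(·)} ‖_{L^{p(·)/q(·)}}^{1/q₋}. (iv) If ‖ |f|^{q(·)} ‖_{L^{p(·)/q(·)}} < 1 then ‖f‖_{L^{p(·)}} ≤ ‖ |f|^{q(·)} ‖_{L^{p(·)/q(·)}}^{1/q₊}.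 -/
/-!
Pointwise, `ρ_{p/q}(t^q) = ρ_p(t)`, so the modulars of `|f|/λ` for `p` and of
`|f|^q / λ^q` for `p/q` coincide. Since `q₋ ≤ q(x) ≤ q₊` almost everywhere, `λ^{q(x)}` is
squeezed between `λ^{q₋}` and `λ^{q₊}` (in an order depending on `λ ≶ 1`), and the
Luxemburg quasi-norm is monotone in the modular; letting `λ` decrease to the norm gives the
four estimates.
-/

open MeasureTheory Filter Topology
open scoped ENNReal

noncomputable section

lemma ENNReal.le_rpow_of_eventually_nhdsGT {a b : ℝ≥0∞} {r : ℝ} (hr : 0 < r)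
    (h : ∀ᶠ c in 𝓝[>] b, a ≤ c ^ r) : a ≤ b ^ r := by
  rcases eq_or_ne b ∞ with rfl | hb
  · simp [ENNReal.top_rpow_of_pos hr]
  · have : NeBot (𝓝[>] b) := nhdsGT_neBot_of_exists_gt ⟨∞, hb.lt_top⟩
    exact ge_of_tendsto ((ENNReal.continuous_rpow_const.tendsto b).mono_left
      nhdsWithin_le_nhds) h

lemma rhoVar_monotone (p : ℝ≥0∞) : Monotone (rhoVar p) := by
  intro t s hts
  unfold rhoVar
  split_ifs with hp ht hs hs
  · exact le_rfl
  · exact zero_le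
  · exact absurd (hts.trans hs) ht
  · exact le_rfl
  · exact ENNReal.rpow_le_rpow hts ENNReal.toReal_nonneg

lemma rhoVar_div_rpow (p : ℝ≥0∞) {q : ℝ≥0∞} (hq0 : q ≠ 0) (hq : q ≠ ∞) (t : ℝ≥0∞) :
    rhoVar (p / q) (t ^ q.toReal) = rhoVar p t := by
  have hq_pos : 0 < q.toReal := ENNReal.toReal_pos hq0 hq
  unfold rhoVar
  rcases eq_or_ne p ∞ with rfl | hp
  · have hle : t ^ q.toReal ≤ 1 ↔ t ≤ 1 := by
      simpa using ENNReal.rpow_le_rpow_iff (z := q.toReal) (y := 1) hq_pos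
    simp [ENNReal.top_div_of_ne_top hq, hle]
  · rw [if_neg hp, if_neg (ENNReal.div_lt_top hp hq0).ne, ← ENNReal.rpow_mul,
      ENNReal.toReal_div, mul_div_cancel₀ _ hq_pos.ne']

section Modular

variable {n : ℕ} {p q F G : EuclideanSpace ℝ (Fin n) → ℝ≥0∞}

lemma varModular_mono_ae (h : ∀ᵐ x, F x ≤ G x) : varModular p F ≤ varModular p G :=
  lintegral_mono_ae (h.mono fun _ hx => rhoVar_monotone _ hx)

lemma varModular_div_rpow (hq : ∀ᵐ x, q x ≠ 0 ∧ q x ≠ ∞) (F : EuclideanSpace ℝ (Fin n) → ℝ≥0∞) :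
    varModular (fun x => p x / q x) (fun x => F x ^ (q x).toReal) = varModular p F :=
  lintegral_congr_ae (hq.mono fun _ hx => rhoVar_div_rpow _ hx.1 hx.2 _)

lemma varNorm_le_of_varModular_le {lam : ℝ≥0∞} (hlam : 0 < lam)
    (h : varModular p (fun x => F x / lam) ≤ 1) : varNorm p F ≤ lam :=
  sInf_le ⟨hlam, h⟩

lemma varModular_div_le_one_of_varNorm_lt {lam : ℝ≥0∞} (h : varNorm p F < lam) :
    varModular p (fun x => F x / lam) ≤ 1 := by
  obtain ⟨a, ⟨-, ha⟩, hlam⟩ := sInf_lt_iff.mp h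
  exact (varModular_mono_ae (ae_of_all _ fun _ => ENNReal.div_le_div_left hlam.le _)).trans ha

lemma varNorm_div_rpow_le (hq : ∀ᵐ x, q x ≠ 0 ∧ q x ≠ ∞) {lam c : ℝ≥0∞}
    (hF : varNorm p F < lam) (hc : 0 < c) (hlam : ∀ᵐ x, lam ^ (q x).toReal ≤ c) :
    varNorm (fun x => p x / q x) (fun x => F x ^ (q x).toReal) ≤ c := by
  refine varNorm_le_of_varModular_le hc ?_
  calc varModular (fun x => p x / q x) (fun x => F x ^ (q x).toReal / c)
      ≤ varModular (fun x => p x / q x) (fun x => (F x / lam) ^ (q x).toReal) := by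
        refine varModular_mono_ae (hlam.mono fun x hx => ?_)
        rw [ENNReal.div_rpow_of_nonneg _ _ ENNReal.toReal_nonneg]
        exact ENNReal.div_le_div_left hx _
    _ = varModular p (fun x => F x / lam) := varModular_div_rpow hq _
    _ ≤ 1 := varModular_div_le_one_of_varNorm_lt hF

lemma varNorm_le_of_varNorm_div_rpow_lt (hq : ∀ᵐ x, q x ≠ 0 ∧ q x ≠ ∞) {lam c : ℝ≥0∞}
    (hG : varNorm (fun x => p x / q x) (fun x => F x ^ (q x).toReal) < c) (hlam : 0 < lam)
    (hc : ∀ᵐ x, c ≤ lam ^ (q x).toReal) : varNorm p F ≤ lam := by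
  refine varNorm_le_of_varModular_le hlam ?_
  calc varModular p (fun x => F x / lam)
      = varModular (fun x => p x / q x) (fun x => (F x / lam) ^ (q x).toReal) :=
        (varModular_div_rpow hq _).symm
    _ ≤ varModular (fun x => p x / q x) (fun x => F x ^ (q x).toReal / c) := by
        refine varModular_mono_ae (hc.mono fun x hx => ?_)
        rw [ENNReal.div_rpow_of_nonneg _ _ ENNReal.toReal_nonneg]
        exact ENNReal.div_le_div_left hx _
    _ ≤ 1 := varModular_div_le_one_of_varNorm_lt hG

end Modular

section NormBounds

variable {n : ℕ} {p q F : EuclideanSpace ℝ (Fin n) → ℝ≥0∞} {a b : ℝ}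

lemma varNorm_div_rpow_le_rpow_of_lt_one (hq : ∀ᵐ x, q x ≠ 0 ∧ q x ≠ ∞)
    (ha : ∀ᵐ x, a ≤ (q x).toReal) (ha0 : 0 < a) (hF : varNorm p F < 1) :
    varNorm (fun x => p x / q x) (fun x => F x ^ (q x).toReal) ≤ varNorm p F ^ a := by
  refine ENNReal.le_rpow_of_eventually_nhdsGT ha0 ?_
  filter_upwards [Ioo_mem_nhdsGT hF] with lam ⟨hFlam, hlam1⟩
  refine varNorm_div_rpow_le hq hFlam
    (ENNReal.rpow_pos (zero_le.trans_lt hFlam) (hlam1.trans ENNReal.one_lt_top).ne) ?_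
  filter_upwards [ha] with x hx
  exact ENNReal.rpow_le_rpow_of_exponent_ge hlam1.le hx

lemma varNorm_div_rpow_le_rpow_of_one_le (hq : ∀ᵐ x, q x ≠ 0 ∧ q x ≠ ∞)
    (hb : ∀ᵐ x, (q x).toReal ≤ b) (hb0 : 0 < b) (hF : 1 ≤ varNorm p F) :
    varNorm (fun x => p x / q x) (fun x => F x ^ (q x).toReal) ≤ varNorm p F ^ b := by
  refine ENNReal.le_rpow_of_eventually_nhdsGT hb0 <|
    eventually_nhdsWithin_of_forall fun lam hFlam => ?_
  have hlam1 : 1 ≤ lam := hF.trans (le_of_lt hFlam)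
  refine varNorm_div_rpow_le hq hFlam (zero_lt_one.trans_le (ENNReal.one_le_rpow hlam1 hb0)) ?_
  filter_upwards [hb] with x hx
  exact ENNReal.rpow_le_rpow_of_exponent_le hlam1 hx

lemma varNorm_le_rpow_of_one_le (hq : ∀ᵐ x, q x ≠ 0 ∧ q x ≠ ∞)
    (ha : ∀ᵐ x, a ≤ (q x).toReal) (ha0 : 0 < a)
    (hG : 1 ≤ varNorm (fun x => p x / q x) (fun x => F x ^ (q x).toReal)) :
    varNorm p F ≤ varNorm (fun x => p x / q x) (fun x => F x ^ (q x).toReal) ^ (1 / a) := by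
  refine ENNReal.le_rpow_of_eventually_nhdsGT (one_div_pos.2 ha0) <|
    eventually_nhdsWithin_of_forall fun c hGc => ?_
  have hlam1 : 1 ≤ c ^ (1 / a) :=
    ENNReal.one_le_rpow (hG.trans (le_of_lt hGc)) (one_div_pos.2 ha0)
  refine varNorm_le_of_varNorm_div_rpow_lt hq hGc (zero_lt_one.trans_le hlam1) ?_
  filter_upwards [ha] with x hx
  calc c = (c ^ (1 / a)) ^ a := by rw [one_div, ENNReal.rpow_inv_rpow ha0.ne']
    _ ≤ (c ^ (1 / a)) ^ (q x).toReal := ENNReal.rpow_le_rpow_of_exponent_le hlam1 hx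

lemma varNorm_le_rpow_of_lt_one (hq : ∀ᵐ x, q x ≠ 0 ∧ q x ≠ ∞)
    (hb : ∀ᵐ x, (q x).toReal ≤ b) (hb0 : 0 < b)
    (hG : varNorm (fun x => p x / q x) (fun x => F x ^ (q x).toReal) < 1) :
    varNorm p F ≤ varNorm (fun x => p x / q x) (fun x => F x ^ (q x).toReal) ^ (1 / b) := by
  refine ENNReal.le_rpow_of_eventually_nhdsGT (one_div_pos.2 hb0) ?_
  filter_upwards [Ioo_mem_nhdsGT hG] with c ⟨hGc, hc1⟩
  have hlam1 : c ^ (1 / b) ≤ 1 := ENNReal.rpow_le_one hc1.le (one_div_pos.2 hb0).le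
  refine varNorm_le_of_varNorm_div_rpow_lt hq hGc
    (ENNReal.rpow_pos (zero_le.trans_lt hGc) (hc1.trans ENNReal.one_lt_top).ne) ?_
  filter_upwards [hb] with x hx
  calc c = (c ^ (1 / b)) ^ b := by rw [one_div, ENNReal.rpow_inv_rpow hb0.ne']
    _ ≤ (c ^ (1 / b)) ^ (q x).toReal := ENNReal.rpow_le_rpow_of_exponent_ge hlam1 hx

end NormBounds

theorem varNorm_rpow_exponent_quotient_general {n : ℕ}
    (p q : EuclideanSpace ℝ (Fin n) → ℝ≥0∞)
    (hq_minus : 0 < essInf q (volume : Measure (EuclideanSpace ℝ (Fin n))))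
    (hq_plus : essSup q (volume : Measure (EuclideanSpace ℝ (Fin n))) < ∞)
    (f : EuclideanSpace ℝ (Fin n) → ℂ) :
    -- notation
    (let F : EuclideanSpace ℝ (Fin n) → ℝ≥0∞ := fun x => (‖f x‖₊ : ℝ≥0∞)
     let G : EuclideanSpace ℝ (Fin n) → ℝ≥0∞ := fun x => (‖f x‖₊ : ℝ≥0∞) ^ (q x).toReal
     let pq : EuclideanSpace ℝ (Fin n) → ℝ≥0∞ := fun x => p x / q x
     let qminus : ℝ := (essInf q (volume : Measure (EuclideanSpace ℝ (Fin n)))).toReal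
     let qplus : ℝ := (essSup q (volume : Measure (EuclideanSpace ℝ (Fin n)))).toReal
     (varNorm p F ≤ 1 → varNorm pq G ≤ (varNorm p F) ^ qminus) ∧
     (1 < varNorm p F → varNorm pq G ≤ (varNorm p F) ^ qplus) ∧
     (1 ≤ varNorm pq G → varNorm p F ≤ (varNorm pq G) ^ (1 / qminus)) ∧
     (varNorm pq G < 1 → varNorm p F ≤ (varNorm pq G) ^ (1 / qplus))) := by
  intro F G pq qminus qplus
  have hle : essInf q volume ≤ essSup q volume := liminf_le_limsup
  have hqm : 0 < qminus := ENNReal.toReal_pos hq_minus.ne' (hle.trans_lt hq_plus).ne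
  have hqp : 0 < qplus := ENNReal.toReal_pos (hq_minus.trans_le hle).ne' hq_plus.ne
  have hq : ∀ᵐ x, q x ≠ 0 ∧ q x ≠ ∞ := ((ae_essInf_le).and (ENNReal.ae_le_essSup q)).mono
    fun x hx => ⟨(hq_minus.trans_le hx.1).ne', (hx.2.trans_lt hq_plus).ne⟩
  have hlower : ∀ᵐ x, qminus ≤ (q x).toReal :=
    (hq.and ae_essInf_le).mono fun x hx => ENNReal.toReal_mono hx.1.2 hx.2
  have hupper : ∀ᵐ x, (q x).toReal ≤ qplus :=
    (ENNReal.ae_le_essSup q).mono fun x hx => ENNReal.toReal_mono hq_plus.ne hx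
  have hbig (hF : 1 ≤ varNorm p F) : varNorm pq G ≤ varNorm p F ^ qplus :=
    varNorm_div_rpow_le_rpow_of_one_le hq hupper hqp hF
  refine ⟨fun hF => ?_, fun hF => hbig hF.le, varNorm_le_rpow_of_one_le hq hlower hqm,
    varNorm_le_rpow_of_lt_one hq hupper hqp⟩
  rcases hF.lt_or_eq with hF | hF
  · exact varNorm_div_rpow_le_rpow_of_lt_one hq hlower hqm hF
  · simpa [hF] using hbig hF.ge

/-- Let `p, q` be measurable exponents with `0 < q₋` and `q₊ < ∞`
and let `f` be measurable. Writing `F = |f|`, `G = |f|^{q(·)}`: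
(i) `‖f‖_p ≤ 1 ⟹ ‖G‖_{p/q} ≤ ‖f‖_p^{q₋}`; (ii) `‖f‖_p > 1 ⟹ ‖G‖_{p/q} ≤ ‖f‖_p^{q₊}`;
(iii) `‖G‖_{p/q} ≥ 1 ⟹ ‖f‖_p ≤ ‖G‖_{p/q}^{1/q₋}`; (iv) `‖G‖_{p/q} < 1 ⟹
`‖f‖_p ≤ ‖G‖_{p/q}^{1/q₊}`. -/
theorem varNorm_rpow_exponent_quotient {n : ℕ}
    (p q : EuclideanSpace ℝ (Fin n) → ℝ≥0∞)
    (hp_meas : Measurable p) (hq_meas : Measurable q)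
    (hp_pos : ∀ x, 0 < p x) (hq_pos : ∀ x, 0 < q x)
    (hq_minus : 0 < essInf q (volume : Measure (EuclideanSpace ℝ (Fin n))))
    (hq_plus : essSup q (volume : Measure (EuclideanSpace ℝ (Fin n))) < ∞)
    (f : EuclideanSpace ℝ (Fin n) → ℂ) (hf : Measurable f) :
    -- notation
    (let F : EuclideanSpace ℝ (Fin n) → ℝ≥0∞ := fun x => (‖f x‖₊ : ℝ≥0∞)
     let G : EuclideanSpace ℝ (Fin n) → ℝ≥0∞ := fun x => (‖f x‖₊ : ℝ≥0∞) ^ (q x).toReal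
     let pq : EuclideanSpace ℝ (Fin n) → ℝ≥0∞ := fun x => p x / q x
     let qminus : ℝ := (essInf q (volume : Measure (EuclideanSpace ℝ (Fin n)))).toReal
     let qplus : ℝ := (essSup q (volume : Measure (EuclideanSpace ℝ (Fin n)))).toReal
     (varNorm p F ≤ 1 → varNorm pq G ≤ (varNorm p F) ^ qminus) ∧
     (1 < varNorm p F → varNorm pq G ≤ (varNorm p F) ^ qplus) ∧
     (1 ≤ varNorm pq G → varNorm p F ≤ (varNorm pq G) ^ (1 / qminus)) ∧
     (varNorm pq G < 1 → varNorm p F ≤ (varNorm pq G) ^ (1 / qplus))) :=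
  varNorm_rpow_exponent_quotient_general p q hq_minus hq_plus f
end
end
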